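/- Fix y ∈ ℝ, τ ∈ (0,1), m ∈ ℝ and ν > 0, and let w(η) = |τ − 1_{(y−η) ≤ 0}|, i.e. w(η) = τ if η < y and w(η) = 1 − τ if η ≥ y. Writing W = τ Φ(y; m, ν²) + (1 − τ)(1 − Φ(y; m, ν²)), one has ∫ [ −(y − η) w(η) ] φ(η; m, ν²) dη = −(y − m) W + (1 − 2τ) ν² φ(y; m, ν²). -/

import Mathlib

/-!
On each side of `y` the weight is constant, so the integral splits into `τ ∫_{η<y}` and
`(1-τ) ∫_{η≥y}` of `(η - y) φ = (η - m) φ + (m - y) φ`. The Gaussian density satisfies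
`ν² φ' = -(η - m) φ`, so `∫ (η - m) φ` over a half-line at `y` is the boundary term `∓ ν² φ(y)`
(the tails vanish because `φ` and `φ'` are integrable), while `∫ φ` gives `Φ(y)` or `1 - Φ(y)`.
-/

open MeasureTheory Real Filter

/-- Gaussian density with mean `m` and variance `ν ^ 2`, evaluated at `x`:
`φ(x; m, ν²) = (2πν²)^{-1/2} exp(−(x−m)²/(2ν²))`. -/
noncomputable def gpdf (m ν x : ℝ) : ℝ :=
  (Real.sqrt (2 * Real.pi * ν ^ 2))⁻¹ * Real.exp (-((x - m) ^ 2) / (2 * ν ^ 2))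

/-- Gaussian cumulative distribution function with mean `m` and variance `ν ^ 2`:
`Φ(c; m, ν²) = ∫_{−∞}^{c} φ(η; m, ν²) dη`. -/
noncomputable def gcdf (m ν c : ℝ) : ℝ := ∫ x in Set.Iio c, gpdf m ν x

open Set ProbabilityTheory

section Gpdf

variable (m ν : ℝ)

lemma gpdf_eq_gaussianPDFReal : gpdf m ν = gaussianPDFReal m ⟨ν ^ 2, sq_nonneg ν⟩ := rfl

lemma integrable_gpdf : Integrable (gpdf m ν) := by
  rw [gpdf_eq_gaussianPDFReal]
  exact integrable_gaussianPDFReal _ _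

lemma hasDerivAt_neg_sq_mul_gpdf (x : ℝ) :
    HasDerivAt (fun t => -(ν ^ 2) * gpdf m ν t) ((x - m) * gpdf m ν x) x := by
  have h := (((hasDerivAt_id x).sub_const m).fun_pow 2).fun_neg.div_const (2 * ν ^ 2)
    |>.exp.const_mul (√(2 * π * ν ^ 2))⁻¹ |>.const_mul (-(ν ^ 2))
  refine h.congr_deriv ?_
  rcases eq_or_ne ν 0 with rfl | hν
  · simp [gpdf]
  · simp only [gpdf, id]
    field_simp
    ring

variable {ν}

lemma integral_gpdf (hν : ν ≠ 0) : ∫ x, gpdf m ν x = 1 := by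
  rw [gpdf_eq_gaussianPDFReal]
  exact integral_gaussianPDFReal_eq_one _ fun h => pow_ne_zero 2 hν (congrArg Subtype.val h)

lemma integral_Ici_gpdf (hν : ν ≠ 0) (y : ℝ) : ∫ x in Ici y, gpdf m ν x = 1 - gcdf m ν y := by
  have h := integral_add_compl (measurableSet_Iio (a := y)) (integrable_gpdf m ν)
  rw [compl_Iio, integral_gpdf m hν] at h
  rw [gcdf]
  linarith

lemma integrable_sub_mul_gpdf (hν : ν ≠ 0) (c : ℝ) : Integrable fun x => (x - c) * gpdf m ν x := by
  have hb : (0 : ℝ) < 1 / (2 * ν ^ 2) := by positivity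
  have hm : Integrable fun x => (x - m) * gpdf m ν x :=
    (((integrable_mul_exp_neg_mul_sq hb).const_mul (√(2 * π * ν ^ 2))⁻¹).comp_sub_right m).congr
      (ae_of_all _ fun x => by simp only [gpdf]; ring_nf)
  exact (hm.add ((integrable_gpdf m ν).const_mul (m - c))).congr
    (ae_of_all _ fun x => by simp only [Pi.add_apply]; ring)

lemma integral_Iic_sub_mul_gpdf (hν : ν ≠ 0) (y : ℝ) :
    ∫ x in Iic y, (x - m) * gpdf m ν x = -(ν ^ 2) * gpdf m ν y := by
  have hderiv := hasDerivAt_neg_sq_mul_gpdf m ν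
  have hint := integrable_sub_mul_gpdf m hν m
  have hlim := tendsto_zero_of_hasDerivAt_of_integrableOn_Iic (a := y) (fun x _ => hderiv x)
    hint.integrableOn ((integrable_gpdf m ν).const_mul _).integrableOn
  simpa using integral_Iic_of_hasDerivAt_of_tendsto' (fun x _ => hderiv x) hint.integrableOn hlim

lemma integral_Ioi_sub_mul_gpdf (hν : ν ≠ 0) (y : ℝ) :
    ∫ x in Ioi y, (x - m) * gpdf m ν x = ν ^ 2 * gpdf m ν y := by
  have hderiv := hasDerivAt_neg_sq_mul_gpdf m ν
  have hint := integrable_sub_mul_gpdf m hν m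
  have hlim := tendsto_zero_of_hasDerivAt_of_integrableOn_Ioi (a := y) (fun x _ => hderiv x)
    hint.integrableOn ((integrable_gpdf m ν).const_mul _).integrableOn
  simpa using integral_Ioi_of_hasDerivAt_of_tendsto' (fun x _ => hderiv x) hint.integrableOn hlim

lemma integral_Iio_sub_mul_gpdf (hν : ν ≠ 0) (y : ℝ) :
    ∫ x in Iio y, (x - y) * gpdf m ν x = -(ν ^ 2) * gpdf m ν y + (m - y) * gcdf m ν y := by
  simp_rw [show ∀ x, (x - y) * gpdf m ν x = (x - m) * gpdf m ν x + (m - y) * gpdf m ν x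
    from fun x => by ring]
  rw [integral_add (integrable_sub_mul_gpdf m hν m).integrableOn
    ((integrable_gpdf m ν).const_mul _).integrableOn, integral_const_mul,
    ← integral_Iic_eq_integral_Iio, integral_Iic_sub_mul_gpdf m hν, gcdf]

lemma integral_Ici_sub_mul_gpdf (hν : ν ≠ 0) (y : ℝ) :
    ∫ x in Ici y, (x - y) * gpdf m ν x = ν ^ 2 * gpdf m ν y + (m - y) * (1 - gcdf m ν y) := by
  simp_rw [show ∀ x, (x - y) * gpdf m ν x = (x - m) * gpdf m ν x + (m - y) * gpdf m ν x
    from fun x => by ring]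
  rw [integral_add (integrable_sub_mul_gpdf m hν m).integrableOn
    ((integrable_gpdf m ν).const_mul _).integrableOn, integral_const_mul,
    integral_Ici_eq_integral_Ioi, integral_Ioi_sub_mul_gpdf m hν, integral_Ici_gpdf m hν]

end Gpdf

lemma integral_ite_lt_mul {μ : Measure ℝ} {f : ℝ → ℝ} (hf : Integrable f μ) (y a b : ℝ) :
    ∫ x, (if x < y then a else b) * f x ∂μ =
      (a * ∫ x in Iio y, f x ∂μ) + b * ∫ x in Ici y, f x ∂μ := by
  have hIio : EqOn (fun x => (if x < y then a else b) * f x) (fun x => a * f x) (Iio y) :=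
    fun x hx => by simp only [if_pos (show x < y from hx)]
  have hIci : EqOn (fun x => (if x < y then a else b) * f x) (fun x => b * f x) (Ici y) :=
    fun x hx => by simp only [if_neg (not_lt.mpr (show y ≤ x from hx))]
  have hint : Integrable (fun x => (if x < y then a else b) * f x) μ := by
    rw [← integrableOn_univ, ← Iio_union_Ici]
    exact (((hf.const_mul a).integrableOn).congr_fun hIio.symm measurableSet_Iio).union
      (((hf.const_mul b).integrableOn).congr_fun hIci.symm measurableSet_Ici)
  rw [← integral_add_compl measurableSet_Iio hint, compl_Iio,
    setIntegral_congr_fun measurableSet_Iio hIio, setIntegral_congr_fun measurableSet_Ici hIci,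
    integral_const_mul, integral_const_mul]

theorem expectile_Psi1_general (y τ m ν : ℝ) (hν : 0 < ν) :
    ∫ η, (-(y - η) * (if η < y then τ else 1 - τ)) * gpdf m ν η
      = -(y - m) * (τ * gcdf m ν y + (1 - τ) * (1 - gcdf m ν y))
        + (1 - 2 * τ) * ν ^ 2 * gpdf m ν y := by
  calc ∫ η, (-(y - η) * (if η < y then τ else 1 - τ)) * gpdf m ν η
      = ∫ η, (if η < y then τ else 1 - τ) * ((η - y) * gpdf m ν η) := by
        congr 1; ext η; ring
    _ = _ := by
      rw [integral_ite_lt_mul (integrable_sub_mul_gpdf m hν.ne' y),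
        integral_Iio_sub_mul_gpdf m hν.ne', integral_Ici_sub_mul_gpdf m hν.ne']
      ring

theorem expectile_Psi1 (y τ m ν : ℝ) (hτ : τ ∈ Set.Ioo (0 : ℝ) 1) (hν : 0 < ν) :
    ∫ η, (-(y - η) * (if η < y then τ else 1 - τ)) * gpdf m ν η
      = -(y - m) * (τ * gcdf m ν y + (1 - τ) * (1 - gcdf m ν y))
        + (1 - 2 * τ) * ν ^ 2 * gpdf m ν y :=
  expectile_Psi1_general y τ m ν hν
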